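/- With the test function F = F_{τ1,τ2,X1,X2,R1,R2}, for every A > 0 with A ≤ 1/(2·X1·X2^{1/2}) one has 𝒥_{αβα,F}(A) = 0. -/
import Mathlib


open MeasureTheory

noncomputable section

/-- `e(x) = exp(2πix)`. -/
def e (x : ℝ) : ℂ := Complex.exp (2 * Real.pi * Complex.I * (x : ℂ))

/-- `ξ_{αβα,1}` in coordinates `(x1, x2, x4)`. -/
def ξaba1 (x1 x2 x4 : ℝ) : ℝ := (x1 ^ 2 + 1) ^ 2 + (x1 * x4 + x2) ^ 2

/-- `ξ_{αβα,2}`. -/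
def ξaba2 (x1 x2 x4 : ℝ) : ℝ := x1 ^ 2 + x2 ^ 2 + x4 ^ 2 + 1

/-- `ζ_{αβα,1}`. -/
def ζaba1 (x1 x2 x4 : ℝ) : ℝ := x1 * x2 - x4

/-- `ζ_{αβα,2}`. -/
def ζaba2 (x1 x2 x4 : ℝ) : ℝ :=
  x1 ^ 2 * x2 - x1 ^ 3 * x4 - x1 * x4 ^ 3 - x2 * x4 ^ 2 - 2 * x1 * x4

/-- The integrand of the inner `ℝ³`-integral of `𝒥_{αβα,F}`. -/
def JabaIntegrand (F : ℝ → ℝ → ℂ) (A y1 y2 x1 x2 x4 : ℝ) : ℂ :=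
  e (A * ζaba1 x1 x2 x4 / (ξaba2 x1 x2 x4 * y1 * y2)) *
  e (ζaba2 x1 x2 x4 * y2 / ξaba1 x1 x2 x4) *
  e (-(A * x1 * y1)) *
  F (A * Real.sqrt (ξaba1 x1 x2 x4) / (ξaba2 x1 x2 x4 * y1 * y2))
    (ξaba2 x1 x2 x4 * y2 / ξaba1 x1 x2 x4) *
  (starRingEnd ℂ) (F (A * y1) y2)

/-- The arithmetic transform `𝒥_{αβα,F}(A)`. -/
def Jaba (F : ℝ → ℝ → ℂ) (A : ℝ) : ℂ :=
  ((A : ℂ) ^ 4)⁻¹ *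
    ∫ y in Set.Ioi (0 : ℝ) ×ˢ Set.Ioi (0 : ℝ),
      (∫ x : ℝ × ℝ × ℝ, JabaIntegrand F A y.1 y.2 x.1 x.2.1 x.2.2) /
        ((y.1 : ℂ) * (y.2 : ℂ) ^ 2)

/-- The normalising factor `ℛ = R1·R2·(R1+R2)·(R2−R1+1)`. -/
def Rfac (R1 R2 : ℝ) : ℝ := R1 * R2 * (R1 + R2) * (R2 - R1 + 1)

/-- The test function `F_{τ1,τ2,X1,X2,R1,R2}`. -/
def Ftest (f : ℝ → ℝ) (τ1 τ2 X1 X2 R1 R2 : ℝ) (y1 y2 : ℝ) : ℂ :=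
  (Real.sqrt (Rfac R1 R2) : ℂ) * (f (X1 * y1) : ℂ) * (f (X2 * y2) : ℂ) *
    (y1 : ℂ) ^ (Complex.I * ((τ1 : ℂ) + (τ2 : ℂ))) *
    (y2 : ℂ) ^ (Complex.I * (τ2 : ℂ))

lemma integrand_zero_aux (f : ℝ → ℝ) (hf_supp : tsupport f ⊆ Set.Icc 1 2)
    (τ1 τ2 X1 X2 R1 R2 : ℝ) (hX1 : 1 ≤ X1) (hX2 : 1 ≤ X2)
    (A : ℝ) (hA : 0 < A) (hAle : A ≤ 1 / (2 * X1 * Real.sqrt X2))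
    (y1 y2 : ℝ) (hy1 : 0 < y1) (hy2 : 0 < y2) (x1 x2 x4 : ℝ) :
    JabaIntegrand (Ftest f τ1 τ2 X1 X2 R1 R2) A y1 y2 x1 x2 x4 = 0 := by
  have hmem : ∀ t, f t ≠ 0 → 1 ≤ t ∧ t ≤ 2 := fun t ht => by
    have h := hf_supp (subset_tsupport f ht)
    exact ⟨h.1, h.2⟩
  have hF0 : ∀ a b : ℝ, Ftest f τ1 τ2 X1 X2 R1 R2 a b ≠ 0 →
      1 ≤ X1 * a ∧ 1 ≤ X2 * b := by
    intro a b h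
    constructor
    · refine (hmem _ ?_).1
      intro h0; apply h; simp [Ftest, h0]
    · refine (hmem _ ?_).1
      intro h0; apply h; simp [Ftest, h0]
  unfold JabaIntegrand
  by_cases h1 : Ftest f τ1 τ2 X1 X2 R1 R2
      (A * Real.sqrt (ξaba1 x1 x2 x4) / (ξaba2 x1 x2 x4 * y1 * y2))
      (ξaba2 x1 x2 x4 * y2 / ξaba1 x1 x2 x4) = 0
  · rw [h1]; ring
  by_cases h2 : Ftest f τ1 τ2 X1 X2 R1 R2 (A * y1) y2 = 0
  · rw [h2]; simp
  exfalso
  obtain ⟨ha1, hb1⟩ := hF0 _ _ h1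
  obtain ⟨hc1, -⟩ := hF0 _ _ h2
  set ξ1 := ξaba1 x1 x2 x4 with hξ1def
  set ξ2 := ξaba2 x1 x2 x4 with hξ2def
  have hξ1 : 1 ≤ ξ1 := by
    rw [hξ1def]; unfold ξaba1; nlinarith [sq_nonneg x1, sq_nonneg (x1 * x4 + x2)]
  have hξ2 : 1 ≤ ξ2 := by
    rw [hξ2def]; unfold ξaba2; nlinarith [sq_nonneg x1, sq_nonneg x2, sq_nonneg x4]
  set S := Real.sqrt ξ1 with hSdef
  have hS : 1 ≤ S := by
    rw [hSdef]; exact Real.one_le_sqrt.mpr hξ1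
  have hSsq : S ^ 2 = ξ1 := Real.sq_sqrt (by linarith)
  have hD : 0 < ξ2 * y1 * y2 := by positivity
  have hq1 : ξ2 * y1 * y2 ≤ X1 * (A * S) := by
    have h := ha1
    rw [show X1 * (A * S / (ξ2 * y1 * y2)) = X1 * (A * S) / (ξ2 * y1 * y2) by ring] at h
    exact (one_le_div hD).mp h
  have hq2 : ξ1 ≤ X2 * (ξ2 * y2) := by
    have h := hb1
    rw [show X2 * (ξ2 * y2 / ξ1) = X2 * (ξ2 * y2) / ξ1 by ring] at h
    exact (one_le_div (by linarith)).mp h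
  have hsX2 : 1 ≤ Real.sqrt X2 := Real.one_le_sqrt.mpr hX2
  have hs2 : Real.sqrt X2 ^ 2 = X2 := Real.sq_sqrt (by linarith)
  have hden : 0 < 2 * X1 * Real.sqrt X2 := by positivity
  have hAd : A * (2 * X1 * Real.sqrt X2) ≤ 1 := (le_div_iff₀ hden).mp hAle
  have hAsq : A ^ 2 * (4 * X1 ^ 2 * X2) ≤ 1 := by
    have hx0 : 0 ≤ A * (2 * X1 * Real.sqrt X2) := by positivity
    have hsq : (A * (2 * X1 * Real.sqrt X2)) ^ 2 ≤ 1 := by nlinarith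
    have heq : A ^ 2 * (4 * X1 ^ 2 * X2) = (A * (2 * X1 * Real.sqrt X2)) ^ 2 := by
      linear_combination (4 * A ^ 2 * X1 ^ 2) * hs2.symm
    linarith [heq ▸ hsq]
  have key : ξ1 ≤ X1 ^ 2 * X2 * A ^ 2 * S := by
    have h1 : ξ1 ≤ ξ1 * (X1 * (A * y1)) := le_mul_of_one_le_right (by linarith) hc1
    have h2 : ξ1 * (X1 * (A * y1)) ≤ (X2 * (ξ2 * y2)) * (X1 * (A * y1)) := by
      apply mul_le_mul_of_nonneg_right hq2; positivity
    have h3 : (X2 * (ξ2 * y2)) * (X1 * (A * y1)) = X1 * X2 * A * (ξ2 * y1 * y2) := by ring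
    have h4 : X1 * X2 * A * (ξ2 * y1 * y2) ≤ X1 * X2 * A * (X1 * (A * S)) := by
      apply mul_le_mul_of_nonneg_left hq1; positivity
    nlinarith
  nlinarith [key, hSsq, hS, hAsq, mul_le_mul_of_nonneg_right hAsq (show (0:ℝ) ≤ S by linarith)]

/-- vanishing of `𝒥_{αβα,F}(A)` for small `A`. -/
theorem Jaba_vanishing (f : ℝ → ℝ) (hf_smooth : ContDiff ℝ (⊤ : ℕ∞) f)
    (hf_range : ∀ y, f y ∈ Set.Icc (0:ℝ) 1)
    (hf_supp : tsupport f ⊆ Set.Icc 1 2) (hf_ne : f ≠ 0)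
    (τ1 τ2 X1 X2 R1 R2 : ℝ) (hτ1 : 0 ≤ τ1) (hτ2 : 0 ≤ τ2)
    (hX1 : 1 ≤ X1) (hX2 : 1 ≤ X2) (hR1 : 1 ≤ R1) (hR12 : R1 ≤ R2)
    (A : ℝ) (hA : 0 < A) (hAle : A ≤ 1 / (2 * X1 * Real.sqrt X2)) :
    Jaba (Ftest f τ1 τ2 X1 X2 R1 R2) A = 0 := by
  unfold Jaba
  have h0 : Set.EqOn
      (fun y : ℝ × ℝ =>
        (∫ x : ℝ × ℝ × ℝ,
            JabaIntegrand (Ftest f τ1 τ2 X1 X2 R1 R2) A y.1 y.2 x.1 x.2.1 x.2.2) /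
          ((y.1 : ℂ) * (y.2 : ℂ) ^ 2))
      (fun _ => 0) (Set.Ioi (0 : ℝ) ×ˢ Set.Ioi (0 : ℝ)) := by
    intro y hy
    have hfun : (fun x : ℝ × ℝ × ℝ =>
        JabaIntegrand (Ftest f τ1 τ2 X1 X2 R1 R2) A y.1 y.2 x.1 x.2.1 x.2.2)
        = fun _ => 0 := funext fun x =>
      integrand_zero_aux f hf_supp τ1 τ2 X1 X2 R1 R2 hX1 hX2 A hA hAle
        y.1 y.2 hy.1 hy.2 x.1 x.2.1 x.2.2
    simp only [hfun, integral_zero, zero_div]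
  rw [MeasureTheory.setIntegral_congr_fun (measurableSet_Ioi.prod measurableSet_Ioi) h0,
    integral_zero, mul_zero]

end
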